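/- Let A, B, C be connected finite graphs and let f : B → A and g : C → A be confluent epimorphisms. Then there exist a connected finite graph D and confluent epimorphisms f₀ : D → B and g₀ : D → C such that f ∘ f₀ = g ∘ g₀. -/

import Mathlib

/-! The amalgam is a connected component `D` of the pullback `{(b, c) | f b = g c}` of `f` and `g`,
with the product edge relation and the two projections.

For a surjective map, confluence is equivalent to a local lifting property (`LiftsEdges`): an edge
at `f v` lifts to a path from `v` inside the preimage of that edge. It holds for the first
projection of the pullback because `g` has it: a path lifting the edge `f b ~ f b'` in `C` is
paired vertex by vertex with `b` or `b'`. It survives restriction to a component, and together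
with connectedness of `B` it gives back surjectivity on vertices and edges and confluence. -/

/-- A (reflexive, symmetric) graph relation. -/
def IsGraph {V : Type*} (E : V → V → Prop) : Prop :=
  (∀ v, E v v) ∧ ∀ a b, E a b → E b a

/-- A subset `S` of the vertices of a graph is connected if it cannot be partitioned
into two nonempty sets with no edge between them. -/
def ConnSet {V : Type*} (E : V → V → Prop) (S : Set V) : Prop :=
  ¬ ∃ P Q : Set V, P.Nonempty ∧ Q.Nonempty ∧ Disjoint P Q ∧ P ∪ Q = S ∧
      ∀ a ∈ P, ∀ b ∈ Q, ¬ E a b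

/-- `C` is a (connected) component of `S`: a maximal connected subset of `S`. -/
def IsComponent {V : Type*} (E : V → V → Prop) (S C : Set V) : Prop :=
  C ⊆ S ∧ ConnSet E C ∧ ∀ C' : Set V, C ⊆ C' → C' ⊆ S → ConnSet E C' → C' = C

/-- An epimorphism of graphs: edge-preserving, surjective on vertices and on edges. -/
def IsEpi {V W : Type*} (EG : V → V → Prop) (EH : W → W → Prop) (f : V → W) : Prop :=
  (∀ a b, EG a b → EH (f a) (f b)) ∧ Function.Surjective f ∧
    ∀ c d, EH c d → ∃ a b, EG a b ∧ f a = c ∧ f b = d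

/-- A map is monotone if the preimage of every vertex is connected. -/
def IsMonotone {V W : Type*} (EG : V → V → Prop) (f : V → W) : Prop :=
  ∀ y : W, ConnSet EG (f ⁻¹' {y})

/-- A map is light if no edge joins two distinct points of a fiber. -/
def IsLight {V W : Type*} (EG : V → V → Prop) (f : V → W) : Prop :=
  ∀ a b : V, f a = f b → a ≠ b → ¬ EG a b

/-- Confluence: every component of the preimage of a connected set maps onto that set. -/
def IsConfluent {V W : Type*} (EG : V → V → Prop) (EH : W → W → Prop) (f : V → W) : Prop :=
  ∀ Q : Set W, ConnSet EH Q → ∀ C : Set V, IsComponent EG (f ⁻¹' Q) C → f '' C = Q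

/-- `l` is a (simple) path from `a` to `b` in the graph. -/
def IsPathList {V : Type*} (E : V → V → Prop) (a b : V) (l : List V) : Prop :=
  l.Nodup ∧ l.Chain' E ∧ l.head? = some a ∧ l.getLast? = some b

/-- A finite graph is a tree if any two distinct vertices are joined by a unique path. -/
def IsTreeRel {V : Type*} (E : V → V → Prop) : Prop :=
  ∀ a b : V, a ≠ b → ∃! l : List V, IsPathList E a b l

open Relation Function Set

section

variable {U V W : Type*}

theorem reflTransGen_symm {R : V → V → Prop} (hR : ∀ a b, R a b → R b a) {a b : V}
    (h : ReflTransGen R a b) : ReflTransGen R b a :=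
  ReflTransGen.mono (fun x y hxy => hR y x hxy) _ _ (reflTransGen_swap.2 h)

theorem exists_reflTransGen_lift {R : V → V → Prop} {R' : U → U → Prop} {e : U → V}
    (he : ∀ u v, R (e u) v → ∃ u', e u' = v) (hR : ∀ u u', R (e u) (e u') → R' u u')
    {u : U} {v : V} (h : ReflTransGen R (e u) v) : ∃ u', e u' = v ∧ ReflTransGen R' u u' := by
  induction h with
  | refl => exact ⟨u, rfl, .refl⟩
  | tail _ hvw ih =>
    obtain ⟨u', rfl, hu'⟩ := ih
    obtain ⟨u'', rfl⟩ := he u' _ hvw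
    exact ⟨u'', rfl, hu'.tail (hR _ _ hvw)⟩

def inducedRel (E : V → V → Prop) (S : Set V) (x y : V) : Prop :=
  x ∈ S ∧ y ∈ S ∧ E x y

theorem inducedRel_mono {E : V → V → Prop} {S T : Set V} (h : S ⊆ T) (x y : V) :
    inducedRel E S x y → inducedRel E T x y :=
  fun hxy => ⟨h hxy.1, h hxy.2.1, hxy.2.2⟩

theorem inducedRel_symm {E : V → V → Prop} (hE : ∀ a b, E a b → E b a) (S : Set V) (x y : V) :
    inducedRel E S x y → inducedRel E S y x :=
  fun hxy => ⟨hxy.2.1, hxy.1, hE _ _ hxy.2.2⟩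

section ConnSet

variable {E : V → V → Prop} {S T C : Set V}

theorem ConnSet.subset_of_closed (hS : ConnSet E S) (hTS : T ⊆ S) (hT : T.Nonempty)
    (hcl : ∀ x ∈ T, ∀ y ∈ S, E x y → y ∈ T) : S ⊆ T := by
  intro y hy
  by_contra hyT
  refine hS ⟨T, S \ T, hT, ⟨y, hy, hyT⟩, disjoint_sdiff_right, union_sdiff_cancel hTS, ?_⟩
  rintro a ha b ⟨hb, hbT⟩ hab
  exact hbT (hcl a ha b hb hab)

theorem connSet_of_reflTransGen (h : ∀ a ∈ S, ∀ b ∈ S, ReflTransGen (inducedRel E S) a b) :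
    ConnSet E S := by
  rintro ⟨P, Q, ⟨p, hp⟩, ⟨q, hq⟩, hPQ, rfl, hno⟩
  have hreach : ∀ y, ReflTransGen (inducedRel E (P ∪ Q)) p y → y ∈ P := by
    intro y hy
    induction hy with
    | refl => exact hp
    | tail _ hyz ih => exact hyz.2.1.resolve_right fun hz => hno _ ih _ hz hyz.2.2
  exact hPQ.ne_of_mem (hreach q (h p (.inl hp) q (.inr hq))) hq rfl

theorem connSet_univ_of_reflTransGen (h : ∀ a b, ReflTransGen E a b) : ConnSet E univ :=
  connSet_of_reflTransGen fun a _ b _ =>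
    ReflTransGen.mono (fun _ _ hxy => ⟨mem_univ _, mem_univ _, hxy⟩) _ _ (h a b)

theorem connSet_singleton (v : V) : ConnSet E {v} :=
  connSet_of_reflTransGen fun a ha b hb => by
    rw [mem_singleton_iff.1 ha, mem_singleton_iff.1 hb]

theorem connSet_pair (hE : ∀ a b, E a b → E b a) {a b : V} (hab : E a b) :
    ConnSet E {a, b} := by
  have hab' : inducedRel E {a, b} a b := ⟨.inl rfl, .inr rfl, hab⟩
  refine connSet_of_reflTransGen ?_
  rintro x (rfl | rfl) y (rfl | rfl)
  exacts [.refl, .single hab', .single (inducedRel_symm hE _ _ _ hab'), .refl]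

theorem isComponent_reachClass (hE : ∀ a b, E a b → E b a) {c : V} (hc : c ∈ S) :
    IsComponent E S {x | ReflTransGen (inducedRel E S) c x} := by
  set C₀ := {x | ReflTransGen (inducedRel E S) c x}
  have hC₀S : C₀ ⊆ S := fun x hx => by
    induction hx with
    | refl => exact hc
    | tail _ hyz _ => exact hyz.2.1
  have hinside : ∀ x ∈ C₀, ReflTransGen (inducedRel E C₀) c x := by
    intro x hx
    induction hx with
    | refl => exact .refl
    | tail hcy hyz ih => exact ih.tail ⟨hcy, hcy.tail hyz, hyz.2.2⟩
  refine ⟨hC₀S, connSet_of_reflTransGen fun a ha b hb => ?_, fun C' hC₀C' hC'S hC' => ?_⟩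
  · exact (reflTransGen_symm (inducedRel_symm hE C₀) (hinside a ha)).trans (hinside b hb)
  · refine (hC'.subset_of_closed hC₀C' ⟨c, .refl⟩ ?_).antisymm hC₀C'
    exact fun x hx y hy hxy => hx.tail ⟨hC₀S hx, hC'S hy, hxy⟩

theorem IsComponent.eq_reachClass (hE : ∀ a b, E a b → E b a) (hC : IsComponent E S C)
    {c : V} (hc : c ∈ C) : C = {x | ReflTransGen (inducedRel E S) c x} := by
  have hC₀ := isComponent_reachClass hE (hC.1 hc)
  refine (hC.2.2 _ ?_ hC₀.1 hC₀.2.1).symm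
  refine (hC.2.1.subset_of_closed (T := {x ∈ C | ReflTransGen (inducedRel E S) c x})
    (sep_subset _ _) ⟨c, hc, .refl⟩ ?_).trans (sep_subset_ofPred _ _)
  exact fun x hx y hy hxy => ⟨hy, hx.2.tail ⟨hC.1 hx.1, hC.1 hy, hxy⟩⟩

theorem IsComponent.nonempty (hC : IsComponent E S C) (hS : S.Nonempty) : C.Nonempty := by
  obtain ⟨s, hs⟩ := hS
  by_contra hCe
  rw [not_nonempty_iff_eq_empty] at hCe
  subst hCe
  exact singleton_ne_empty s (hC.2.2 {s} (empty_subset _) (singleton_subset_iff.2 hs)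
    (connSet_singleton s))

end ConnSet

def LiftsEdges (EV : V → V → Prop) (EW : W → W → Prop) (f : V → W) : Prop :=
  ∀ v w, EW (f v) w → ∃ v', f v' = w ∧ ReflTransGen (inducedRel EV (f ⁻¹' {f v, w})) v v'

section LiftsEdges

variable {EU : U → U → Prop} {EV : V → V → Prop} {EW : W → W → Prop} {f : V → W}

theorem IsConfluent.liftsEdges (hf : IsConfluent EV EW f) (hEV : ∀ a b, EV a b → EV b a)
    (hEW : ∀ a b, EW a b → EW b a) : LiftsEdges EV EW f := by
  intro v w hvw
  have himage := hf _ (connSet_pair hEW hvw) _ (isComponent_reachClass hEV (S := f ⁻¹' _)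
    (show f v ∈ ({f v, w} : Set W) from .inl rfl))
  obtain ⟨v', hv', hfv'⟩ := himage.symm.subset (show w ∈ ({f v, w} : Set W) from .inr rfl)
  exact ⟨v', hfv', hv'⟩

theorem LiftsEdges.comp {e : U → V} (hf : LiftsEdges EV EW f)
    (he : ∀ u v, EV (e u) v → ∃ u', e u' = v) (hE : ∀ u u', EV (e u) (e u') → EU u u') :
    LiftsEdges EU EW (f ∘ e) := by
  intro u w huw
  obtain ⟨v', hv', hpath⟩ := hf (e u) w huw
  obtain ⟨u', rfl, hpath'⟩ := exists_reflTransGen_lift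
    (R' := inducedRel EU ((f ∘ e) ⁻¹' {f (e u), w}))
    (fun u v h => he u v h.2.2) (fun u u' h => ⟨h.1, h.2.1, hE u u' h.2.2⟩) hpath
  exact ⟨u', hv', hpath'⟩

theorem LiftsEdges.surjective [Nonempty V] (hf : LiftsEdges EV EW f) (hW : ConnSet EW univ) :
    Surjective f := by
  have hrange := hW.subset_of_closed (subset_univ _) (range_nonempty f) (by
    rintro _ ⟨v, rfl⟩ w - hvw
    obtain ⟨v', hv', -⟩ := hf v w hvw
    exact ⟨v', hv'⟩)
  exact fun w => hrange (mem_univ w)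

theorem LiftsEdges.exists_edge (hf : LiftsEdges EV EW f) (hEV : ∀ v, EV v v) {v : V} {w : W}
    (hvw : EW (f v) w) : ∃ x y, EV x y ∧ f x = f v ∧ f y = w := by
  obtain ⟨v', hv', hpath⟩ := hf v w hvw
  induction hpath with
  | refl => exact ⟨v, v, hEV v, rfl, hv'⟩
  | @tail y z _ hyz ih =>
    by_cases hy : f y = w
    · exact ih hy
    · exact ⟨y, z, hyz.2.2, hyz.1.resolve_right hy, hv'⟩

theorem LiftsEdges.isEpi [Nonempty V] (hf : LiftsEdges EV EW f)
    (hmap : ∀ a b, EV a b → EW (f a) (f b)) (hEV : ∀ v, EV v v) (hW : ConnSet EW univ) :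
    IsEpi EV EW f := by
  refine ⟨hmap, hf.surjective hW, fun c d hcd => ?_⟩
  obtain ⟨v, rfl⟩ := hf.surjective hW c
  exact hf.exists_edge hEV hcd

theorem LiftsEdges.isConfluent (hf : LiftsEdges EV EW f) (hEV : ∀ a b, EV a b → EV b a)
    (hsurj : Surjective f) : IsConfluent EV EW f := by
  intro Q hQ M hM
  have hMQ : f '' M ⊆ Q := image_subset_iff.2 hM.1
  refine hMQ.antisymm ?_
  rcases Q.eq_empty_or_nonempty with rfl | ⟨w, hw⟩
  · exact empty_subset _
  obtain ⟨v, rfl⟩ := hsurj w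
  refine hQ.subset_of_closed hMQ ((hM.nonempty ⟨v, hw⟩).image f) ?_
  rintro _ ⟨x, hx, rfl⟩ y hy hxy
  obtain ⟨x', rfl, hpath⟩ := hf x _ hxy
  have hsub : f ⁻¹' {f x, f x'} ⊆ f ⁻¹' Q := by
    rintro z (hz | hz) <;> rw [mem_preimage, hz]
    exacts [hM.1 hx, hy]
  refine ⟨x', ?_, rfl⟩
  rw [hM.eq_reachClass hEV hx]
  exact ReflTransGen.mono (inducedRel_mono hsub) _ _ hpath

end LiftsEdges

/-- Indexed by `Fin n` so that the amalgam can be taken in `Type`, whatever the universes of the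
factors. -/
theorem exists_fin_component [Finite V] {R : V → V → Prop} (hR : ∀ a b, R a b → R b a)
    (v₀ : V) : ∃ (n : ℕ) (e : Fin n → V), Nonempty (Fin n) ∧ (∀ i v, R (e i) v → ∃ j, e j = v) ∧
      ConnSet (fun i j => R (e i) (e j)) univ := by
  let K := {v | ReflTransGen R v₀ v}
  let e : Fin (Nat.card K) → V := Subtype.val ∘ (Finite.equivFin K).symm
  have he : Injective e := Subtype.val_injective.comp (Finite.equivFin K).symm.injective
  have hK : ∀ i, ReflTransGen R v₀ (e i) := fun i => ((Finite.equivFin K).symm i).2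
  have hcl : ∀ i v, R (e i) v → ∃ j, e j = v :=
    fun i v h => ⟨Finite.equivFin K ⟨v, (hK i).tail h⟩,
      congrArg Subtype.val ((Finite.equivFin K).symm_apply_apply _)⟩
  refine ⟨_, e, ⟨Finite.equivFin K ⟨v₀, .refl⟩⟩, hcl, connSet_univ_of_reflTransGen fun i j => ?_⟩
  obtain ⟨j', hj', hpath⟩ := exists_reflTransGen_lift hcl (fun _ _ => id)
    ((reflTransGen_symm hR (hK i)).trans (hK j))
  rwa [he hj'] at hpath

theorem isEpi_of_isEmpty [IsEmpty W] (EV : V → V → Prop) (EW : W → W → Prop) (f : V → W) :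
    IsEpi EV EW f :=
  ⟨fun a => isEmptyElim (f a), isEmptyElim, fun c => isEmptyElim c⟩

theorem isConfluent_of_isEmpty [IsEmpty W] (EV : V → V → Prop) (EW : W → W → Prop)
    (f : V → W) : IsConfluent EV EW f := by
  intro Q _ C hC
  rw [Q.eq_empty_of_isEmpty] at hC ⊢
  rw [subset_empty_iff.1 hC.1, image_empty]

section Pullback

variable {A B C : Type*} {EA : A → A → Prop} {EB : B → B → Prop} {EC : C → C → Prop}
  {f : B → A} {g : C → A}

def pullbackRel (EB : B → B → Prop) (EC : C → C → Prop) (p q : f.Pullback g) : Prop :=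
  EB p.fst q.fst ∧ EC p.snd q.snd

theorem isGraph_pullbackRel (hB : IsGraph EB) (hC : IsGraph EC) :
    IsGraph (pullbackRel EB EC : f.Pullback g → f.Pullback g → Prop) :=
  ⟨fun _ => ⟨hB.1 _, hC.1 _⟩, fun _ _ h => ⟨hB.2 _ _ h.1, hC.2 _ _ h.2⟩⟩

theorem liftsEdges_pullback_fst (hBrefl : ∀ b, EB b b) (hBsymm : ∀ a b, EB a b → EB b a)
    (hCrefl : ∀ c, EC c c) (hf : ∀ a b, EB a b → EA (f a) (f b)) (hg : LiftsEdges EC EA g) :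
    LiftsEdges (pullbackRel EB EC) EB (Pullback.fst : f.Pullback g → B) := by
  rintro p b' hbb'
  set S : Set B := {p.fst, b'}
  have hS : ∀ x ∈ S, ∀ y ∈ S, EB x y := by
    rintro x (rfl | rfl) y (rfl | rfl)
    exacts [hBrefl _, hbb', hBsymm _ _ hbb', hBrefl _]
  obtain ⟨c', hc', hpath⟩ := hg p.snd (f b') (p.2 ▸ hf _ _ hbb')
  have hlift : ∀ c, ReflTransGen (inducedRel EC (g ⁻¹' {g p.snd, f b'})) p.snd c →
      ∃ q : f.Pullback g, q.snd = c ∧ q.fst ∈ S ∧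
        ReflTransGen (inducedRel (pullbackRel EB EC) (Pullback.fst ⁻¹' S)) p q := by
    intro c hc
    induction hc with
    | refl => exact ⟨p, rfl, .inl rfl, .refl⟩
    | @tail c d _ hcd ih =>
      obtain ⟨q, rfl, hqS, hpq⟩ := ih
      obtain ⟨y, hyS, hy⟩ : ∃ y ∈ S, f y = g d := by
        rcases hcd.2.1 with h | h
        · exact ⟨p.fst, .inl rfl, p.2.trans h.symm⟩
        · exact ⟨b', .inr rfl, h.symm⟩
      exact ⟨⟨(y, d), hy⟩, rfl, hyS, hpq.tail ⟨hqS, hyS, hS _ hqS _ hyS, hcd.2.2⟩⟩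
  obtain ⟨q, rfl, hqS, hpq⟩ := hlift c' hpath
  exact ⟨⟨(b', q.snd), hc'.symm⟩, rfl,
    hpq.tail ⟨hqS, .inr rfl, hS _ hqS _ (.inr rfl), hCrefl _⟩⟩

theorem liftsEdges_pullback_snd (hCrefl : ∀ c, EC c c) (hCsymm : ∀ a b, EC a b → EC b a)
    (hBrefl : ∀ b, EB b b) (hg : ∀ a b, EC a b → EA (g a) (g b)) (hf : LiftsEdges EB EA f) :
    LiftsEdges (pullbackRel EB EC) EC (Pullback.snd : f.Pullback g → C) :=
  (liftsEdges_pullback_fst hCrefl hCsymm hBrefl hg hf).comp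
    (e := fun p : f.Pullback g => (⟨p.1.swap, p.2.symm⟩ : g.Pullback f))
    (fun _ q _ => ⟨⟨q.1.swap, q.2.symm⟩, rfl⟩) fun _ _ h => ⟨h.2, h.1⟩

end Pullback

end

theorem statement11_general {A B C : Type*} [Fintype B] [Fintype C]
    (EA : A → A → Prop) (EB : B → B → Prop) (EC : C → C → Prop)
    (hA : IsGraph EA) (hB : IsGraph EB) (hC : IsGraph EC)
    (hBc : ConnSet EB Set.univ) (hCc : ConnSet EC Set.univ)
    (f : B → A) (g : C → A)
    (hf : IsEpi EB EA f) (hg : IsEpi EC EA g)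
    (hfconf : IsConfluent EB EA f) (hgconf : IsConfluent EC EA g) :
    ∃ (D : Type) (_ : Fintype D) (ED : D → D → Prop),
      IsGraph ED ∧ ConnSet ED Set.univ ∧
        ∃ (f₀ : D → B) (g₀ : D → C),
          IsEpi ED EB f₀ ∧ IsConfluent ED EB f₀ ∧
          IsEpi ED EC g₀ ∧ IsConfluent ED EC g₀ ∧
          f ∘ f₀ = g ∘ g₀ := by
  rcases isEmpty_or_nonempty (f.Pullback g) with hP | ⟨⟨p₀⟩⟩
  · have : IsEmpty B := ⟨fun b => let ⟨c, hc⟩ := hg.2.1 (f b); hP.false ⟨(b, c), hc.symm⟩⟩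
    have : IsEmpty C := ⟨fun c => let ⟨b, hb⟩ := hf.2.1 (g c); hP.false ⟨(b, c), hb⟩⟩
    exact ⟨Empty, inferInstance, fun _ _ => True, ⟨fun _ => trivial, fun _ _ _ => trivial⟩,
      connSet_univ_of_reflTransGen isEmptyElim, isEmptyElim, isEmptyElim,
      isEpi_of_isEmpty _ _ _, isConfluent_of_isEmpty _ _ _,
      isEpi_of_isEmpty _ _ _, isConfluent_of_isEmpty _ _ _, funext isEmptyElim⟩
  have hP := isGraph_pullbackRel (f := f) (g := g) hB hC
  obtain ⟨n, e, _, hcl, hconn⟩ := exists_fin_component hP.2 p₀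
  have hD : IsGraph fun i j => pullbackRel EB EC (e i) (e j) :=
    ⟨fun _ => hP.1 _, fun _ _ => hP.2 _ _⟩
  have hfst := (liftsEdges_pullback_fst hB.1 hB.2 hC.1 hf.1
    (hgconf.liftsEdges hC.2 hA.2)).comp hcl fun _ _ => id
  have hsnd := (liftsEdges_pullback_snd hC.1 hC.2 hB.1 hg.1
    (hfconf.liftsEdges hB.2 hA.2)).comp hcl fun _ _ => id
  have hfst_epi := hfst.isEpi (fun _ _ h => h.1) hD.1 hBc
  have hsnd_epi := hsnd.isEpi (fun _ _ h => h.2) hD.1 hCc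
  exact ⟨Fin n, inferInstance, _, hD, hconn, Pullback.fst ∘ e, Pullback.snd ∘ e,
    hfst_epi, hfst.isConfluent hD.2 hfst_epi.2.1, hsnd_epi, hsnd.isConfluent hD.2 hsnd_epi.2.1,
    funext fun i => (e i).2⟩

/-- Projective amalgamation for connected finite graphs with confluent epimorphisms. -/
theorem statement11 {A B C : Type*} [Fintype A] [Fintype B] [Fintype C]
    (EA : A → A → Prop) (EB : B → B → Prop) (EC : C → C → Prop)
    (hA : IsGraph EA) (hB : IsGraph EB) (hC : IsGraph EC)
    (hAc : ConnSet EA Set.univ) (hBc : ConnSet EB Set.univ) (hCc : ConnSet EC Set.univ)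
    (f : B → A) (g : C → A)
    (hf : IsEpi EB EA f) (hg : IsEpi EC EA g)
    (hfconf : IsConfluent EB EA f) (hgconf : IsConfluent EC EA g) :
    ∃ (D : Type) (_ : Fintype D) (ED : D → D → Prop),
      IsGraph ED ∧ ConnSet ED Set.univ ∧
        ∃ (f₀ : D → B) (g₀ : D → C),
          IsEpi ED EB f₀ ∧ IsConfluent ED EB f₀ ∧
          IsEpi ED EC g₀ ∧ IsConfluent ED EC g₀ ∧
          f ∘ f₀ = g ∘ g₀ :=
  statement11_general EA EB EC hA hB hC hBc hCc f g hf hg hfconf hgconf
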